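/- Let G be a locally compact Hausdorff topological group whose center Z(G) is compact, and let (A,μ) be a partially crossed topological G-module with A compact Hausdorff. Then Inn(G,(A,μ)) = {((g ↦ a·(g•a)⁻¹), μ(a)·z) : a ∈ A, z ∈ Z(G)} is a compact, hence closed, subset of Der_c(G,(A,μ)) (with its subspace topology from C(G,A) × G). -/

import Mathlib

/-!
`Inn(G,(A,μ))` is the image of the compact space `A × Z(G)` under the continuous map
`(a, z) ↦ (g ↦ a * (g • a)⁻¹, μ a * z)`, hence compact, and closed because `C(G,A) × G` is
Hausdorff. Such a pair lies in `Der_c(G,(A,μ))` because `μ` is equivariant and `z` is central.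
-/

variable (G A : Type*)
  [Group G] [TopologicalSpace G] [IsTopologicalGroup G]
  [Group A] [TopologicalSpace A] [IsTopologicalGroup A]
  [MulDistribMulAction G A] [ContinuousSMul G A]

/-- `Der_c(G,(A,μ))` for a topological `G`-module `(A,μ)` (with `G` acting on itself by
conjugation). -/
def derSetG (μ : A →* G) : Set (C(G, A) × G) :=
  {p | (∀ g h : G, p.1 (g * h) = p.1 g * g • p.1 h) ∧
    ∀ g : G, μ (p.1 g) = p.2 * g * p.2⁻¹ * g⁻¹}

/-- `Inn(G,(A,μ)) = {((g ↦ a * (g • a)⁻¹), μ a * z) : a ∈ A, z ∈ Z(G)}`. -/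
def innSetG (μ : A →* G) : Set (C(G, A) × G) :=
  {p | ∃ a : A, ∃ z ∈ Subgroup.center G,
    (∀ g : G, p.1 g = a * (g • a)⁻¹) ∧ p.2 = μ a * z}

open scoped commutatorElement in
theorem commutatorElement_mul_of_mem_center_right {G : Type*} [Group G] (x g : G) {z : G}
    (hz : z ∈ Subgroup.center G) : ⁅x * z, g⁆ = ⁅x, g⁆ := by
  rw [commutatorElement_def, commutatorElement_def, mul_inv_rev, mul_assoc x z g,
    ← Subgroup.mem_center_iff.mp hz g]
  group

section PrincipalCrossedHom

-- Implicit, and without `IsTopologicalGroup G`, unlike the variables of the definitions above.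
variable {G A : Type*} [Group G] [TopologicalSpace G] [Group A] [TopologicalSpace A]
  [IsTopologicalGroup A] [MulDistribMulAction G A] [ContinuousSMul G A]

def principalCrossedHom : C(A, C(G, A)) :=
  ContinuousMap.curry ⟨fun p => p.1 * (p.2 • p.1)⁻¹, by fun_prop⟩

@[simp]
theorem principalCrossedHom_apply (a : A) (g : G) :
    principalCrossedHom a g = a * (g • a)⁻¹ :=
  rfl

theorem principalCrossedHom_mul (a : A) (g h : G) :
    principalCrossedHom a (g * h) = principalCrossedHom a g * g • principalCrossedHom a h := by
  simp only [principalCrossedHom_apply, smul_mul', smul_inv', mul_smul]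
  group

theorem map_principalCrossedHom (μ : A →* G) (hμG : ∀ (g : G) (a : A), μ (g • a) = g * μ a * g⁻¹)
    (a : A) (g : G) : μ (principalCrossedHom a g) = μ a * g * (μ a)⁻¹ * g⁻¹ := by
  rw [principalCrossedHom_apply, map_mul, map_inv, hμG]
  group

theorem innSetG_eq_image (μ : A →* G) :
    innSetG G A μ = (fun q : A × G => (principalCrossedHom q.1, μ q.1 * q.2)) ''
      (Set.univ ×ˢ (Subgroup.center G : Set G)) := by
  ext p
  constructor
  · rintro ⟨a, z, hz, hp₁, hp₂⟩
    exact ⟨(a, z), ⟨trivial, hz⟩, Prod.ext (ContinuousMap.ext fun g => (hp₁ g).symm) hp₂.symm⟩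
  · rintro ⟨⟨a, z⟩, ⟨-, hz⟩, rfl⟩
    exact ⟨a, z, hz, fun _ => rfl, rfl⟩

theorem isCompact_innSetG [ContinuousMul G] [CompactSpace A]
    (hZ : IsCompact (Subgroup.center G : Set G)) (μ : A →* G) (hμc : Continuous μ) :
    IsCompact (innSetG G A μ) := by
  rw [innSetG_eq_image]
  exact (isCompact_univ.prod hZ).image <|
    (principalCrossedHom.continuous.comp continuous_fst).prodMk
      ((hμc.comp continuous_fst).mul continuous_snd)

theorem innSetG_subset_derSetG (μ : A →* G)
    (hμG : ∀ (g : G) (a : A), μ (g • a) = g * μ a * g⁻¹) :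
    innSetG G A μ ⊆ derSetG G A μ := by
  rw [innSetG_eq_image]
  rintro _ ⟨⟨a, z⟩, ⟨-, hz⟩, rfl⟩
  refine ⟨principalCrossedHom_mul a, fun g => ?_⟩
  rw [map_principalCrossedHom μ hμG]
  exact (commutatorElement_mul_of_mem_center_right _ g hz).symm

end PrincipalCrossedHom

theorem innSet_compact_closed_compact_center
    [T2Space G] [CompactSpace A] [T2Space A]
    (hZ : IsCompact ((Subgroup.center G : Subgroup G) : Set G))
    (μ : A →* G) (hμc : Continuous μ)
    (hμG : ∀ (g : G) (a : A), μ (g • a) = g * μ a * g⁻¹) :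
    IsCompact (innSetG G A μ) ∧ innSetG G A μ ⊆ derSetG G A μ ∧
      IsClosed (Subtype.val ⁻¹' innSetG G A μ : Set (derSetG G A μ)) := by
  have hcompact := isCompact_innSetG hZ μ hμc
  exact ⟨hcompact, innSetG_subset_derSetG μ hμG,
    hcompact.isClosed.preimage continuous_subtype_val⟩
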